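/- For n ≥ 1 and k ≥ 0, the number of sequences (u_1, ..., u_n) with 1 ≤ u_i ≤ n + k + 1 for all i, u_n > n, and satisfying condition (1), equals C_n^(k) = ((k+1)/(2n+k+1)) * binomial(2n+k+1, n). -/

import Mathlib

/-!
Pad sequences by zeros and let `ballotSeqs m c` be the sequences of length `m` with
`1 ≤ u i ≤ i + 1 + c` satisfying condition (1). Classify them by the last entry `u M`.
If `u M = B + 1 ≤ M + 1`, condition (1) for the pairs `(i, M)` and `(i, j)` says exactly that the
sequence is an arbitrary member of `ballotSeqs (M - B) c` followed by a member of
`ballotSeqs B 0`. If `u M = M + 1 + d` with `d ≥ 1`, deleting it leaves an arbitrary member of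
`ballotSeqs M d`. The numbers `gc m c` satisfy the same recurrence (a Pascal-type identity,
telescoped, plus a convolution generalizing the Catalan recurrence `gc j 0 = catalan j`), so they
count `ballotSeqs m c`. The sequences of the theorem are the members of `ballotSeqs n (k + 1)` of
the second kind, counted by `∑ d ≤ k, gc (n - 1) (d + 1) = gc n k`.
-/

def gc (n k : ℕ) : ℚ := ((k : ℚ) + 1) / (2 * (n : ℚ) + (k : ℚ) + 1) * ((2 * n + k + 1).choose n : ℚ)

def cat (n : ℕ) : ℚ := 1 / ((n : ℚ) + 1) * ((2 * n).choose n : ℚ)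

def Cond {n : ℕ} (u : Fin n → ℕ) : Prop :=
  ∀ i j : Fin n, i < j →
    ¬(1 ≤ (u j : ℤ) - (((j : ℕ) : ℤ) - ((i : ℕ) : ℤ)) ∧
      (u j : ℤ) - (((j : ℕ) : ℤ) - ((i : ℕ) : ℤ)) ≤ (u i : ℤ) - 1)

open Finset Function

lemma gc_zero_left (c : ℕ) : gc 0 c = 1 := by
  simp [gc]; positivity

lemma gc_zero_right (m : ℕ) : gc m 0 = catalan m := by
  have hcat : ((m : ℚ) + 1) * catalan m = (2 * m).choose m := by
    exact_mod_cast succ_mul_catalan_eq_centralBinom m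
  have hchoose : ((2 * m + 1 : ℕ) : ℚ) * (2 * m).choose m = (2 * m + 1).choose m * (m + 1) := by
    exact_mod_cast Nat.choose_symm_half m ▸ Nat.add_one_mul_choose_eq (2 * m) m
  unfold gc
  push_cast at hchoose ⊢
  simp only [add_zero, zero_add, one_div]
  field_simp
  apply mul_right_cancel₀ (Nat.cast_add_one_ne_zero m)
  linear_combination -hchoose - (2 * (m : ℚ) + 1) * hcat

lemma gc_succ_zero (a : ℕ) : gc (a + 1) 0 = gc a 1 := by
  have h : ((2 * a + 3 : ℕ) : ℚ) * (2 * a + 2).choose a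
      = (2 * a + 3).choose (a + 1) * (a + 1) := by
    exact_mod_cast Nat.add_one_mul_choose_eq (2 * a + 2) a
  unfold gc
  push_cast at h ⊢
  rw [show 2 * (a + 1) + 0 + 1 = 2 * a + 3 by ring, show 2 * a + 1 + 1 = 2 * a + 2 by ring]
  simp only [add_zero, zero_add, one_div]
  field_simp
  linear_combination (-2) * h

lemma gc_succ_succ (a c : ℕ) : gc (a + 1) (c + 1) = gc (a + 1) c + gc a (c + 2) := by
  have h₁ : ((2 * a + c + 4 : ℕ) : ℚ) * (2 * a + c + 3).choose a
      = (2 * a + c + 4).choose (a + 1) * (a + 1) := by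
    exact_mod_cast Nat.add_one_mul_choose_eq (2 * a + c + 3) a
  have h₂ : ((2 * a + c + 3).choose (a + 1) : ℚ) * (a + 1)
      = (2 * a + c + 3).choose a * ((2 * a + c + 3 - a : ℕ) : ℚ) := by
    exact_mod_cast Nat.choose_succ_right_eq (2 * a + c + 3) a
  rw [show 2 * a + c + 3 - a = a + c + 3 by omega] at h₂
  unfold gc
  rw [show 2 * (a + 1) + (c + 1) + 1 = 2 * a + c + 4 by ring,
    show 2 * (a + 1) + c + 1 = 2 * a + c + 3 by ring,
    show 2 * a + (c + 2) + 1 = 2 * a + c + 3 by ring]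
  push_cast at h₁ h₂ ⊢
  field_simp
  apply mul_right_cancel₀ (Nat.cast_add_one_ne_zero a)
  linear_combination (-(c + 2 : ℚ) * (2 * a + c + 3) ^ 2) * h₁
    - ((2 * a + c + 4 : ℚ) * (c + 1) * (2 * a + c + 3)) * h₂

lemma gc_succ_eq_sum (a k : ℕ) : gc (a + 1) k = ∑ t ∈ range (k + 1), gc a (t + 1) := by
  induction k with
  | zero => simpa using gc_succ_zero a
  | succ k ih => rw [sum_range_succ, ← ih, gc_succ_succ]

lemma gc_add_one_eq_sum_mul (a c : ℕ) :
    gc a (c + 1) = ∑ j ∈ range (a + 1), gc (a - j) c * gc j 0 := by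
  induction a generalizing c with
  | zero => simp [gc_zero_left]
  | succ a ih =>
    induction c with
    | zero =>
      rw [← gc_succ_zero, gc_zero_right, catalan_succ, ← Fin.sum_univ_eq_sum_range]
      push_cast
      refine Fintype.sum_congr _ _ fun j => ?_
      rw [gc_zero_right, gc_zero_right, mul_comm]
    | succ c ihc =>
      have hsplit : ∀ j ∈ range (a + 1), gc (a + 1 - j) (c + 1) * gc j 0
          = gc (a + 1 - j) c * gc j 0 + gc (a - j) (c + 2) * gc j 0 := fun j hj => by
        rw [show a + 1 - j = a - j + 1 by grind, gc_succ_succ, add_mul]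
      rw [gc_succ_succ, ihc, ih, sum_range_succ (fun j => gc (a + 1 - j) (c + 1) * gc j 0),
        sum_congr rfl hsplit, sum_add_distrib, sum_range_succ (fun j => gc (a + 1 - j) c * gc j 0),
        Nat.sub_self, gc_zero_left, gc_zero_left]
      ring

lemma gc_succ (M c : ℕ) :
    gc (M + 1) c
      = ∑ j ∈ range (M + 1), gc (M - j) c * gc j 0 + ∑ d ∈ range c, gc M (d + 1) := by
  rw [gc_succ_eq_sum, sum_range_succ, gc_add_one_eq_sum_mul, add_comm]

lemma Set.ncard_eq_sum_ncard_fiber {α β : Type*} {s : Set α} (hs : s.Finite)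
    {f : α → β} {t : Finset β} (h : Set.MapsTo f s t) :
    s.ncard = ∑ b ∈ t, {x ∈ s | f x = b}.ncard := by
  classical
  rw [Set.ncard_eq_toFinset_card s hs, card_eq_sum_card_fiberwise (by simpa using h)]
  refine sum_congr rfl fun b _ => ?_
  rw [← Set.ncard_coe_finset]
  congr
  ext x
  simp

/-- Condition (1) on the first `m` entries of `u`, with both alternatives moved so that no
integer subtraction occurs. -/
def CondUpTo (m : ℕ) (u : ℕ → ℕ) : Prop :=
  ∀ i j, i < j → j < m → u j ≤ j - i ∨ u i + (j - i) ≤ u j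

/-- Sequences of length `m`, extended by zeros so that all lengths live in `ℕ → ℕ`. -/
def ballotSeqs (m c : ℕ) : Set (ℕ → ℕ) :=
  {u | (∀ i < m, 1 ≤ u i ∧ u i ≤ i + 1 + c) ∧ (∀ i, m ≤ i → u i = 0) ∧
    CondUpTo m u}

def padZero {n : ℕ} (u : Fin n → ℕ) : ℕ → ℕ :=
  fun i => if h : i < n then u ⟨i, h⟩ else 0

lemma padZero_of_lt {n i : ℕ} (u : Fin n → ℕ) (hi : i < n) :
    padZero u i = u ⟨i, hi⟩ :=
  dif_pos hi

lemma padZero_restrict {n : ℕ} {w : ℕ → ℕ} (hw : ∀ i, n ≤ i → w i = 0) :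
    padZero (fun i : Fin n => w i) = w := by
  funext i
  by_cases hi : i < n
  · exact dif_pos hi
  · exact (dif_neg hi).trans (hw i (by omega)).symm

lemma ballotSeqs_finite (m c : ℕ) : (ballotSeqs m c).Finite := by
  refine (Set.finite_range fun v : Fin m → Fin (m + c + 1) =>
    padZero fun i => (v i : ℕ)).subset ?_
  rintro u ⟨hb, hz, -⟩
  exact ⟨fun i => ⟨u i, by have := hb i i.2; omega⟩, padZero_restrict hz⟩

lemma ballotSeqs_zero (c : ℕ) : ballotSeqs 0 c = {0} := by
  ext u
  refine ⟨fun hu => funext fun i => hu.2.1 i (Nat.zero_le i), ?_⟩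
  rintro rfl
  exact ⟨fun i hi => absurd hi (Nat.not_lt_zero i), fun _ _ => rfl,
    fun _ j _ hj => absurd hj (Nat.not_lt_zero j)⟩

/-- The bijection deletes the last entry: condition (1) for the pairs `(i, M)` with
`u M = M + 1 + d` says exactly `u i ≤ i + 1 + d`. -/
lemma ncard_ballotSeqs_last_eq_add {M c d : ℕ} (hd : d ≤ c) :
    {u ∈ ballotSeqs (M + 1) c | u M = M + 1 + d}.ncard = (ballotSeqs M d).ncard := by
  refine (Set.InvOn.bijOn (f := fun u => update u M 0) (f' := fun w => update w M (M + 1 + d))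
    ⟨fun u hu => ?_, fun w hw => ?_⟩ (fun u hu => ?_) (fun w hw => ?_)).ncard_eq
  · simp only [update_idem]
    exact update_eq_self_iff.2 hu.2.symm
  · simp only [update_idem]
    exact update_eq_self_iff.2 (hw.2.1 M le_rfl).symm
  · obtain ⟨⟨hb, hz, hc⟩, hM⟩ := hu
    refine ⟨fun i hi => ?_, fun i hi => ?_, fun i j hij hj => ?_⟩
    · have := hb i (by omega)
      have := hc i M hi (by omega)
      dsimp only
      rw [update_of_ne (by omega)]
      omega
    · simp only [update_apply]
      split_ifs
      · rfl
      · exact hz i (by omega)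
    · dsimp only
      rw [update_of_ne (by omega), update_of_ne (by omega)]
      exact hc i j hij (by omega)
  · obtain ⟨hb, hz, hc⟩ := hw
    refine ⟨⟨fun i hi => ?_, fun i hi => ?_, fun i j hij hj => ?_⟩, update_self ..⟩ <;>
      simp only [update_apply]
    · have := hb i
      split_ifs <;> omega
    · have := hz i
      split_ifs <;> omega
    · have := hb i
      have := hc i j hij
      split_ifs <;> omega

def takeSeq (A : ℕ) (u : ℕ → ℕ) : ℕ → ℕ := fun i => if i < A then u i else 0

def dropSeq (A B : ℕ) (u : ℕ → ℕ) : ℕ → ℕ := fun i => if i < B then u (A + i) else 0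

def joinSeq (A B : ℕ) (v w : ℕ → ℕ) : ℕ → ℕ :=
  fun i => if i < A then v i else if i = A + B then B + 1 else w (i - A)

lemma takeSeq_mem {A m c : ℕ} {u : ℕ → ℕ} (hA : A ≤ m) (hu : u ∈ ballotSeqs m c) :
    takeSeq A u ∈ ballotSeqs A c := by
  obtain ⟨hb, -, hc⟩ := hu
  refine ⟨fun i hi => ?_, fun i hi => if_neg (by omega), fun i j hij hj => ?_⟩
  · simpa [takeSeq, hi] using hb i (by omega)
  · simpa [takeSeq, hj, hij.trans hj] using hc i j hij (by omega)

/-- A last entry `B + 1` forces the `B` entries before it to satisfy `u (A + i) ≤ i + 1`. -/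
lemma dropSeq_mem {A B c : ℕ} {u : ℕ → ℕ} (hu : u ∈ ballotSeqs (A + B + 1) c)
    (hlast : u (A + B) = B + 1) : dropSeq A B u ∈ ballotSeqs B 0 := by
  obtain ⟨hb, -, hc⟩ := hu
  refine ⟨fun i hi => ?_, fun i hi => if_neg (by omega), fun i j hij hj => ?_⟩
  · have := hb (A + i) (by omega)
    have := hc (A + i) (A + B) (by omega) (by omega)
    simp only [dropSeq, hi, if_true]
    omega
  · have := hc (A + i) (A + j) (by omega) (by omega)
    simp only [dropSeq, hj, hij.trans hj, if_true]
    omega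

lemma joinSeq_mem {A B c : ℕ} {v w : ℕ → ℕ} (hv : v ∈ ballotSeqs A c)
    (hw : w ∈ ballotSeqs B 0) : joinSeq A B v w ∈ ballotSeqs (A + B + 1) c := by
  obtain ⟨hvb, hvz, hvc⟩ := hv
  obtain ⟨hwb, hwz, hwc⟩ := hw
  refine ⟨fun i hi => ?_, fun i hi => ?_, fun i j hij hj => ?_⟩ <;> simp only [joinSeq]
  · have := hvb i
    have := hwb (i - A)
    split_ifs <;> omega
  · split_ifs <;> first | omega | exact hwz _ (by omega)
  · have := hvc i j hij
    have := hwb (i - A)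
    have := hwb (j - A)
    have := hwc (i - A) (j - A)
    split_ifs <;> omega

/-- A last entry `B + 1` cuts the sequence into an arbitrary prefix of length `A` and a block of
length `B` with no slack. -/
lemma ncard_ballotSeqs_last_eq_succ {A B M c : ℕ} (hM : A + B = M) :
    {u ∈ ballotSeqs (M + 1) c | u M = B + 1}.ncard
      = (ballotSeqs A c).ncard * (ballotSeqs B 0).ncard := by
  subst hM
  rw [← Set.ncard_prod]
  refine (Set.InvOn.bijOn (f := fun u => (takeSeq A u, dropSeq A B u))
    (f' := fun p => joinSeq A B p.1 p.2) ⟨fun u hu => ?_, fun p hp => ?_⟩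
    (fun u hu => Set.mk_mem_prod (takeSeq_mem (by omega) hu.1) (dropSeq_mem hu.1 hu.2))
    (fun p hp => Set.mem_sep (joinSeq_mem hp.1 hp.2) (by simp [joinSeq]))).ncard_eq
  · obtain ⟨⟨-, hz, -⟩, hlast⟩ := hu
    funext i
    have := hz i
    simp only [joinSeq, takeSeq, dropSeq]
    split_ifs <;> first | omega | rw [Nat.add_sub_cancel' (by omega)] | (subst_vars; omega)
  · obtain ⟨⟨-, hvz, -⟩, -, hwz, -⟩ := hp
    refine Prod.ext (funext fun i => ?_) (funext fun i => ?_) <;>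
      simp only [joinSeq, takeSeq, dropSeq]
    · have := hvz i
      split_ifs <;> omega
    · have := hwz i
      split_ifs <;> first | omega | rw [Nat.add_sub_cancel_left]

lemma ncard_ballotSeqs_last_le (M c : ℕ) :
    {u ∈ ballotSeqs (M + 1) c | u M ≤ M + 1}.ncard
      = ∑ B ∈ range (M + 1), (ballotSeqs (M - B) c).ncard * (ballotSeqs B 0).ncard := by
  rw [Set.ncard_eq_sum_ncard_fiber ((ballotSeqs_finite _ _).sep _) (f := fun u => u M - 1)
    (t := range (M + 1)) fun u hu => by have := hu.2; simp only [mem_coe, mem_range]; omega]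
  refine sum_congr rfl fun B hB => ?_
  have hBM := mem_range.1 hB
  rw [← ncard_ballotSeqs_last_eq_succ (by omega : M - B + B = M)]
  congr 1
  ext u
  simp only [Set.mem_sep_iff, and_assoc]
  exact and_congr_right fun hu => by have := (hu.1 M (by omega)).1; omega

lemma ncard_ballotSeqs_last_gt (M c : ℕ) :
    {u ∈ ballotSeqs (M + 1) c | M + 1 < u M}.ncard
      = ∑ d ∈ range c, (ballotSeqs M (d + 1)).ncard := by
  rw [Set.ncard_eq_sum_ncard_fiber ((ballotSeqs_finite _ _).sep _) (f := fun u => u M - (M + 2))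
    (t := range c) fun u hu => by
      have := (hu.1.1 M (by omega)).2; have := hu.2; simp only [mem_coe, mem_range]; omega]
  refine sum_congr rfl fun d hd => ?_
  rw [← ncard_ballotSeqs_last_eq_add (mem_range.1 hd)]
  congr 1
  ext u
  simp only [Set.mem_sep_iff, and_assoc]
  exact and_congr_right fun _ => by omega

lemma ncard_ballotSeqs_succ (M c : ℕ) :
    (ballotSeqs (M + 1) c).ncard
      = ∑ B ∈ range (M + 1), (ballotSeqs (M - B) c).ncard * (ballotSeqs B 0).ncard
        + ∑ d ∈ range c, (ballotSeqs M (d + 1)).ncard := by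
  rw [← ncard_ballotSeqs_last_le, ← ncard_ballotSeqs_last_gt, ← Set.ncard_union_eq
    (Set.disjoint_left.2 fun u hle hgt => by have := hle.2; have := hgt.2; omega)
    ((ballotSeqs_finite _ _).sep _) ((ballotSeqs_finite _ _).sep _), ← Set.sep_or]
  congr 1
  ext u
  simp only [Set.mem_sep_iff]
  exact (and_iff_left (le_or_gt _ _)).symm

theorem ncard_ballotSeqs (m c : ℕ) : ((ballotSeqs m c).ncard : ℚ) = gc m c := by
  induction m using Nat.strong_induction_on generalizing c with
  | _ m ih =>
    rcases m with _ | M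
    · rw [ballotSeqs_zero, Set.ncard_singleton, gc_zero_left, Nat.cast_one]
    · rw [ncard_ballotSeqs_succ, gc_succ]
      push_cast
      congr 1
      · refine sum_congr rfl fun B hB => ?_
        have := mem_range.1 hB
        rw [ih (M - B) (by omega), ih B (by omega)]
      · exact sum_congr rfl fun d _ => ih M (by omega) _

lemma cond_iff_condUpTo_padZero {n : ℕ} (u : Fin n → ℕ) :
    Cond u ↔ CondUpTo n (padZero u) := by
  constructor
  · intro h i j hij hj
    have := h ⟨i, hij.trans hj⟩ ⟨j, hj⟩ hij
    simp only [padZero, hj, hij.trans hj, dif_pos]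
    simp only at this
    omega
  · intro h i j hij
    have := h i j hij j.2
    simp only [padZero, j.2, i.2, dif_pos, Fin.eta] at this
    omega

lemma ncard_cond_eq_ncard_ballotSeqs (n k : ℕ) (hn : 1 ≤ n) :
    {u : Fin n → ℕ | (∀ i, 1 ≤ u i ∧ u i ≤ n + k + 1) ∧
        n < u ⟨n - 1, Nat.sub_one_lt_of_lt hn⟩ ∧ Cond u}.ncard
      = {u ∈ ballotSeqs n (k + 1) | n < u (n - 1)}.ncard := by
  refine (Set.InvOn.bijOn (f := padZero) (f' := fun w (i : Fin n) => w i)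
    ⟨fun u _ => funext fun i => dif_pos i.2, fun w hw => padZero_restrict hw.1.2.1⟩
    (fun u hu => ?_) (fun w hw => ?_)).ncard_eq
  · obtain ⟨hb, hlast, hc⟩ := hu
    rw [← padZero_of_lt u] at hlast
    have hcond := (cond_iff_condUpTo_padZero u).1 hc
    refine ⟨⟨fun i hi => ?_, fun i hi => dif_neg (by omega), hcond⟩, hlast⟩
    have hbi := hb ⟨i, hi⟩
    rw [← padZero_of_lt u hi] at hbi
    rcases lt_or_ge i (n - 1) with hi' | hi'
    -- as `u (n - 1) > n`, condition (1) for `(i, n - 1)` gives `u i + (n - 1 - i) ≤ u (n - 1)`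
    · have hbl := hb ⟨n - 1, by omega⟩
      rw [← padZero_of_lt u] at hbl
      have := hcond i (n - 1) hi' (by omega)
      omega
    · omega
  · obtain ⟨⟨hb, hz, hc⟩, hlast⟩ := hw
    refine ⟨fun i => ?_, hlast, (cond_iff_condUpTo_padZero _).2 ?_⟩
    · have := hb i i.2
      dsimp only
      omega
    · rwa [padZero_restrict hz]

theorem stmt9 (n k : ℕ) (hn : 1 ≤ n) :
    ({u : Fin n → ℕ | (∀ i, 1 ≤ u i ∧ u i ≤ n + k + 1) ∧ n < u ⟨n - 1, by omega⟩ ∧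
      Cond u}.ncard : ℚ) = gc n k := by
  obtain ⟨N, rfl⟩ : ∃ N, n = N + 1 := ⟨n - 1, by omega⟩
  rw [ncard_cond_eq_ncard_ballotSeqs (N + 1) k hn, Nat.add_sub_cancel,
    ncard_ballotSeqs_last_gt, gc_succ_eq_sum]
  push_cast
  exact sum_congr rfl fun d _ => ncard_ballotSeqs N (d + 1)
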